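/- arXiv:2209.14230 — 4 statements merged into one kernel-verified Lean document; each statement's English description precedes it below -/
import Mathlib

section
/- Let m = 2^{y+1}·3^u·b − 1 with b a positive odd integer not divisible by 3, y ≥ 1, u ≥ 0. Then the y-fold iterate of the reduced Collatz map applied to m equals 2·3^{u+y}·b − 1, a number whose root 3^{u+y}·b − 1 is even. -/
/-- The reduced Collatz map on odd numbers. -/
def redCollatz (m : ℕ) : ℕ := (3 * m + 1) / 2 ^ padicValNat 2 (3 * m + 1)

lemma redCollatz_step (y u b : ℕ) (hbpos : 0 < b) (hy : 1 ≤ y) :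
    redCollatz (2 ^ (y + 1) * 3 ^ u * b - 1) = 2 ^ y * 3 ^ (u + 1) * b - 1 := by
  set N := 2 ^ (y + 1) * 3 ^ u * b with hNdef
  set k := 2 ^ y * 3 ^ (u + 1) * b with hkdef
  have hN : 1 ≤ N := Nat.one_le_iff_ne_zero.mpr (by positivity)
  have hkeven : 2 ∣ k := by
    refine Dvd.dvd.mul_right (Dvd.dvd.mul_right ?_ _) _
    exact dvd_pow_self 2 (Nat.one_le_iff_ne_zero.mp hy)
  have hk2 : 2 ≤ k := le_trans (by norm_num) (Nat.le_of_dvd (by positivity) hkeven)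
  have hmul : 3 * N = 2 * k := by rw [hNdef, hkdef]; ring
  have h3m : 3 * (N - 1) + 1 = 2 * (k - 1) := by omega
  have hodd : ¬ 2 ∣ (k - 1) := by omega
  have hval : padicValNat 2 (2 * (k - 1)) = 1 := by
    rw [padicValNat.mul (by norm_num) (by omega), padicValNat.self (by norm_num),
      padicValNat.eq_zero_of_not_dvd hodd]
  rw [redCollatz, h3m, hval, pow_one, Nat.mul_div_cancel_left _ (by norm_num)]

theorem stmt_4 (y u b m : ℕ) (hb : b % 2 = 1) (hbpos : 0 < b) (hb3 : ¬ 3 ∣ b)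
    (hy : 1 ≤ y) (hm : m = 2 ^ (y + 1) * 3 ^ u * b - 1) :
    redCollatz^[y] m = 2 * 3 ^ (u + y) * b - 1 ∧ (3 ^ (u + y) * b - 1) % 2 = 0 := by
  subst hm
  constructor
  · clear hy
    induction y generalizing u with
    | zero => simp
    | succ n ih =>
      rw [Function.iterate_succ_apply, redCollatz_step (n + 1) u b hbpos (by omega)]
      rw [ih (u + 1)]
      ring_nf
  · have hodd : (3 ^ (u + y) * b) % 2 = 1 := by
      rw [Nat.mul_mod, Nat.pow_mod]
      simp [hb]
    have : 1 ≤ 3 ^ (u + y) * b := Nat.one_le_iff_ne_zero.mpr (by positivity)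
    omega
end

section
/- For any odd positive integer m > 1 with root a = (m−1)/2 odd, repeated application of the reduced Collatz map eventually produces a number whose root is even; moreover during these steps the values strictly increase, and they are bounded above: if a = 2^y·3^u·b − 1 (b odd, 3 ∤ b, y ≥ 1), all intermediate values are at most 2·3^{u+y}·b − 1. -/
lemma val_two_mul_odd (n : ℕ) (hn : n % 2 = 1) :
    padicValNat 2 (2 * n) = 1 := by
  have h0 : n ≠ 0 := by omega
  have hnd : ¬ (2 ∣ n) := by omega
  rw [padicValNat.mul (by norm_num) h0, padicValNat.self (by norm_num),
    padicValNat.eq_zero_of_not_dvd hnd]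

lemma redCollatz_step_s7 (t j : ℕ) (ht : 0 < t) (hj : 1 ≤ j) :
    redCollatz (2 ^ (j + 1) * t - 1) = 2 ^ j * (3 * t) - 1 := by
  have hP : 0 < 2 ^ j * t := by positivity
  have h2 : 2 ^ (j + 1) * t = 2 * (2 ^ j * t) := by ring
  have hA : 2 ^ j * (3 * t) = 3 * (2 ^ j * t) := by ring
  have hodd : (3 * (2 ^ j * t) - 1) % 2 = 1 := by
    have : 2 ∣ 2 ^ j * t := Dvd.dvd.mul_right (dvd_pow_self 2 (by omega)) t
    omega
  have key : 3 * (2 ^ (j + 1) * t - 1) + 1 = 2 * (3 * (2 ^ j * t) - 1) := by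
    rw [h2]; omega
  rw [redCollatz, key, val_two_mul_odd _ hodd, hA]
  simp

lemma orbit_formula (m y u b : ℕ) (hbpos : 0 < b)
    (hm : m = 2 ^ (y + 1) * 3 ^ u * b - 1) :
    ∀ i, i ≤ y → redCollatz^[i] m = 2 ^ (y + 1 - i) * 3 ^ (u + i) * b - 1 := by
  intro i
  induction i with
  | zero => intro _; simpa using hm
  | succ n ih =>
    intro hn
    have hn' : n ≤ y := by omega
    have hj : 1 ≤ y - n := by omega
    have hfn := ih hn'
    rw [Function.iterate_succ_apply', hfn]
    have he : y + 1 - n = (y - n) + 1 := by omega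
    have ht : 0 < 3 ^ (u + n) * b := by positivity
    have := redCollatz_step_s7 (3 ^ (u + n) * b) (y - n) ht hj
    rw [he, mul_assoc, this]
    have : 2 ^ (y - n) * (3 * (3 ^ (u + n) * b)) = 2 ^ (y + 1 - (n + 1)) * 3 ^ (u + (n + 1)) * b := by
      have h1 : y + 1 - (n + 1) = y - n := by omega
      have h2 : u + (n + 1) = (u + n) + 1 := by omega
      rw [h1, h2, pow_succ]; ring
    rw [this]

theorem stmt_7 (m y u b : ℕ) (hmodd : m % 2 = 1) (hm1 : 1 < m)
    (haodd : ((m - 1) / 2) % 2 = 1)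
    (hb : b % 2 = 1) (hbpos : 0 < b) (hb3 : ¬ 3 ∣ b) (hy : 1 ≤ y)
    (ha : (m - 1) / 2 = 2 ^ y * 3 ^ u * b - 1) :
    ∃ k : ℕ, ((redCollatz^[k] m - 1) / 2) % 2 = 0 ∧
      (∀ i < k, redCollatz^[i] m < redCollatz^[i + 1] m) ∧
      (∀ i ≤ k, redCollatz^[i] m ≤ 2 * 3 ^ (u + y) * b - 1) := by
  have hprod : 0 < 2 ^ y * 3 ^ u * b := by positivity
  have hm : m = 2 ^ (y + 1) * 3 ^ u * b - 1 := by
    have h2 : 2 ^ (y + 1) * 3 ^ u * b = 2 * (2 ^ y * 3 ^ u * b) := by ring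
    omega
  have hfor := orbit_formula m y u b hbpos hm
  refine ⟨y, ?_, ?_, ?_⟩
  · rw [hfor y le_rfl, show y + 1 - y = 1 from by omega]
    have hodd : Odd (3 ^ (u + y) * b) :=
      (Odd.pow (by decide)).mul (Nat.odd_iff.mpr hb)
    have hodd' := Nat.odd_iff.mp hodd
    have hpos : 0 < 3 ^ (u + y) * b := by positivity
    rw [show 2 ^ 1 * 3 ^ (u + y) * b = 2 * (3 ^ (u + y) * b) from by ring]
    omega
  · intro i hi
    have h1 := hfor i (by omega)
    have h2 := hfor (i + 1) (by omega)
    rw [h1, h2]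
    have e1 : y + 1 - i = (y - i) + 1 := by omega
    have e2 : y + 1 - (i + 1) = y - i := by omega
    have e3 : u + (i + 1) = (u + i) + 1 := by omega
    rw [e1, e2, e3]
    have hlt : 2 ^ ((y - i) + 1) * 3 ^ (u + i) * b < 2 ^ (y - i) * 3 ^ ((u + i) + 1) * b := by
      have : 2 ^ ((y - i) + 1) * 3 ^ (u + i) = 2 ^ (y - i) * 3 ^ (u + i) * 2 := by ring
      rw [this]
      have : 2 ^ (y - i) * 3 ^ ((u + i) + 1) = 2 ^ (y - i) * 3 ^ (u + i) * 3 := by ring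
      rw [this]
      have hpp : 0 < 2 ^ (y - i) * 3 ^ (u + i) := by positivity
      nlinarith
    have hpos : 0 < 2 ^ ((y - i) + 1) * 3 ^ (u + i) * b := by positivity
    omega
  · intro i hi
    have h1 := hfor i hi
    rw [h1]
    have hle : 2 ^ (y + 1 - i) * 3 ^ (u + i) * b ≤ 2 * 3 ^ (u + y) * b := by
      have e1 : y + 1 - i = (y - i) + 1 := by omega
      have e2 : u + y = (u + i) + (y - i) := by omega
      calc 2 ^ (y + 1 - i) * 3 ^ (u + i) * b
          = 2 * 2 ^ (y - i) * 3 ^ (u + i) * b := by rw [e1]; ring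
        _ ≤ 2 * 3 ^ (y - i) * 3 ^ (u + i) * b := by gcongr <;> norm_num
        _ = 2 * 3 ^ (u + y) * b := by rw [e2, pow_add]; ring
    omega
end

section
/- Let n ≥ 1 and x an even positive integer with 2^{x+n} > 3^{x/2+n}. If additionally 2^{x−(x/2)·log₂3} > (3^n − 1)/(2^n − 1), i.e., 2^{x+n} − 3^{x/2+n} > 2^x − 3^{x/2}, then (2^x − 3^{x/2})/(2^{x+n} − 3^{x/2+n}) < 1, hence there is no positive integer b satisfying 2^n·b − 1 = 3^{x/2}·a with a = (3^n·b − 1)/2^x. -/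
theorem stmt_10 (n k : ℕ) (hn : 1 ≤ n) (hk : 1 ≤ k)
    (hpos : (3 : ℝ) ^ (k + n) < 2 ^ (2 * k + n))
    (h : (2 : ℝ) ^ (2 * k + n) - 3 ^ (k + n) > 2 ^ (2 * k) - 3 ^ k) :
    ((2 : ℝ) ^ (2 * k) - 3 ^ k) / ((2 : ℝ) ^ (2 * k + n) - 3 ^ (k + n)) < 1 ∧
      ¬ ∃ b : ℕ, 1 ≤ b ∧
        (2 : ℝ) ^ n * b - 1 = 3 ^ k * ((3 ^ n * (b : ℝ) - 1) / 2 ^ (2 * k)) := by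
  have hD : (0:ℝ) < 2 ^ (2*k+n) - 3 ^ (k+n) := by linarith
  constructor
  · rw [div_lt_one hD]; linarith
  · rintro ⟨b, hb, heq⟩
    have hb1 : (1:ℝ) ≤ (b:ℝ) := by exact_mod_cast hb
    have h2 : (0:ℝ) < 2 ^ (2*k) := by positivity
    have heq' : (2:ℝ)^(2*k) * (2^n * b - 1) = 3^k * (3^n * b - 1) := by
      field_simp at heq; linarith
    have e1 : (2:ℝ)^(2*k) * 2^n = 2^(2*k+n) := by rw [← pow_add]
    have e2 : (3:ℝ)^k * 3^n = 3^(k+n) := by rw [← pow_add]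
    nlinarith [mul_le_mul_of_nonneg_left hb1 hD.le]
end

section
/- Let n ≥ 1, x odd ≥ 1, y ≥ 3. If 2^y < 3^{(x+1)/2+n}/2^{x−1+n} then (2^x·(1 + 2^{y−2}) − 3^{(x+1)/2})/(2^{x+y−1+n} − 3^{(x+1)/2+n}) < 0; and if 2^y > 3^{(x+1)/2}·(3^n − 1)/(2^{x−2}·(2^{n+1} − 1)) (equivalently 2^{x+y−1+n} − 3^{(x+1)/2+n} > 2^x(1+2^{y−2}) − 3^{(x+1)/2}) then that quotient is < 1. -/
theorem stmt_14 (n s y x : ℕ) (hn : 1 ≤ n) (hx : x = 2 * s + 1) (hy : 3 ≤ y) :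
    ((2 : ℝ) ^ y < 3 ^ (s + 1 + n) / 2 ^ (x - 1 + n) →
      ((2 : ℝ) ^ x * (1 + 2 ^ (y - 2)) - 3 ^ (s + 1)) /
        ((2 : ℝ) ^ (x + y - 1 + n) - 3 ^ (s + 1 + n)) < 0) ∧
    ((2 : ℝ) ^ (x + y - 1 + n) - 3 ^ (s + 1 + n) >
        2 ^ x * (1 + 2 ^ (y - 2)) - 3 ^ (s + 1) →
      ((2 : ℝ) ^ x * (1 + 2 ^ (y - 2)) - 3 ^ (s + 1)) /
        ((2 : ℝ) ^ (x + y - 1 + n) - 3 ^ (s + 1 + n)) < 1) := by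
  obtain ⟨m, rfl⟩ : ∃ m, y = m + 3 := ⟨y - 3, by omega⟩
  subst hx
  have e1 : 2 * s + 1 - 1 + n = 2 * s + n := by omega
  have e2 : 2 * s + 1 + (m + 3) - 1 + n = 2 * s + n + (m + 3) := by omega
  have e3 : m + 3 - 2 = m + 1 := by omega
  rw [e1, e2, e3]
  -- numerator positive
  have hN : (0 : ℝ) < 2 ^ (2 * s + 1) * (1 + 2 ^ (m + 1)) - 3 ^ (s + 1) := by
    have h1 : (3 : ℝ) ^ (s + 1) < 4 ^ (s + 1) :=
      pow_lt_pow_left₀ (by norm_num) (by norm_num) (by omega)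
    have h2 : (4 : ℝ) ^ (s + 1) = 2 ^ (2 * s + 1) * 2 := by
      have : (4 : ℝ) = 2 ^ 2 := by norm_num
      rw [this, ← pow_mul, show 2 * (s + 1) = (2 * s + 1) + 1 by ring, pow_succ]
    have h3 : (2 : ℝ) ^ (2 * s + 1) * 2 ≤ 2 ^ (2 * s + 1) * (1 + 2 ^ (m + 1)) := by
      have : (2 : ℝ) ≤ 1 + 2 ^ (m + 1) := by
        have : (2 : ℝ) ^ 1 ≤ 2 ^ (m + 1) := pow_le_pow_right₀ (by norm_num) (by omega)
        simpa using by linarith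
      have hp : (0 : ℝ) < 2 ^ (2 * s + 1) := by positivity
      nlinarith
    linarith
  constructor
  · intro h
    have hp : (0 : ℝ) < 2 ^ (2 * s + n) := by positivity
    rw [lt_div_iff₀ hp] at h
    have hD : (2 : ℝ) ^ (2 * s + n + (m + 3)) - 3 ^ (s + 1 + n) < 0 := by
      have : (2 : ℝ) ^ (2 * s + n + (m + 3)) = 2 ^ (m + 3) * 2 ^ (2 * s + n) := by
        rw [← pow_add]; ring_nf
      linarith [this ▸ h]
    exact div_neg_of_pos_of_neg hN hD
  · intro h
    have hD : (0 : ℝ) < 2 ^ (2 * s + n + (m + 3)) - 3 ^ (s + 1 + n) := lt_trans hN h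
    exact (div_lt_one hD).mpr h
end
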